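/- arXiv:2112.11924 — 3 statements merged into one kernel-verified Lean document; each statement's English description precedes it below -/
import Mathlib

section
/- For any real numbers A > 0 and V, setting u = V + 2√(2β/(ρA₀))·A^(1/4), the right-hand side of the dynamic stenosis ODE, namely (β/(ρA₀L_s))(√A − √A₀) − (K_s/(2L_s))·V²·(A/A_s − 1)² − (8πμ/(ρA_s²) + R_T/(ρL_s))·A·V, equals (1/(32ρL_s))·G(u, 2V − u), where G(u,v) = ρ(u−v)² − 32β/√A₀ − d₁(u−v)⁴(u+v) − 4K_sρ(u+v)²(d₂(u−v)⁴ − 1)², with d₁ = (R_T + 8πμL_s/A_s²)·ρ²A₀²/(4³β²) and d₂ = ρ²A₀²/(4⁵β²A_s). -/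
/-- The right-hand side of the dynamic stenosis ODE equals `(1/(32ρL_s))·G(u, 2V − u)`,
where `u` is the Riemann invariant. -/
theorem dynamic_bottleneck_in_riemann_variables (β ρ A₀ Ks μ Ls As RT : ℝ)
    (hβ : 0 < β) (hρ : 0 < ρ) (hA₀ : 0 < A₀) (hKs : 0 < Ks) (hμ : 0 < μ)
    (hLs : 0 < Ls) (hAs : 0 < As) (hRT : 0 ≤ RT) (A V : ℝ) (hA : 0 < A) :
    (β / (ρ * A₀ * Ls)) * (Real.sqrt A - Real.sqrt A₀)
      - (Ks / (2 * Ls)) * V ^ 2 * (A / As - 1) ^ 2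
      - (8 * Real.pi * μ / (ρ * As ^ 2) + RT / (ρ * Ls)) * A * V
    = (1 / (32 * ρ * Ls)) *
        (ρ * ((V + 2 * Real.sqrt (2 * β / (ρ * A₀)) * A ^ ((1 : ℝ) / 4))
              - (2 * V - (V + 2 * Real.sqrt (2 * β / (ρ * A₀)) * A ^ ((1 : ℝ) / 4)))) ^ 2
          - 32 * β / Real.sqrt A₀
          - ((RT + 8 * Real.pi * μ * Ls / As ^ 2) * ρ ^ 2 * A₀ ^ 2 / (4 ^ 3 * β ^ 2)) *
              ((V + 2 * Real.sqrt (2 * β / (ρ * A₀)) * A ^ ((1 : ℝ) / 4))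
                - (2 * V - (V + 2 * Real.sqrt (2 * β / (ρ * A₀)) * A ^ ((1 : ℝ) / 4)))) ^ 4 *
              ((V + 2 * Real.sqrt (2 * β / (ρ * A₀)) * A ^ ((1 : ℝ) / 4))
                + (2 * V - (V + 2 * Real.sqrt (2 * β / (ρ * A₀)) * A ^ ((1 : ℝ) / 4))))
          - 4 * Ks * ρ *
              ((V + 2 * Real.sqrt (2 * β / (ρ * A₀)) * A ^ ((1 : ℝ) / 4))
                + (2 * V - (V + 2 * Real.sqrt (2 * β / (ρ * A₀)) * A ^ ((1 : ℝ) / 4)))) ^ 2 *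
              ((ρ ^ 2 * A₀ ^ 2 / (4 ^ 5 * β ^ 2 * As)) *
                  ((V + 2 * Real.sqrt (2 * β / (ρ * A₀)) * A ^ ((1 : ℝ) / 4))
                    - (2 * V - (V + 2 * Real.sqrt (2 * β / (ρ * A₀)) * A ^ ((1 : ℝ) / 4)))) ^ 4
                - 1) ^ 2) := by
  set c := Real.sqrt (2 * β / (ρ * A₀)) with hc
  set q := A ^ ((1 : ℝ) / 4) with hqdef
  have hc2 : c ^ 2 = 2 * β / (ρ * A₀) := Real.sq_sqrt (by positivity)
  have hq2 : q ^ 2 = Real.sqrt A := by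
    rw [hqdef, ← Real.rpow_natCast (A ^ ((1:ℝ)/4)) 2, ← Real.rpow_mul hA.le,
      Real.sqrt_eq_rpow]
    norm_num
  have hq4 : q ^ 4 = A := by
    have : q ^ 4 = (q ^ 2) ^ 2 := by ring
    rw [this, hq2, Real.sq_sqrt hA.le]
  have key1 : (V + 2 * c * q) - (2 * V - (V + 2 * c * q)) = 4 * (c * q) := by ring
  have key2 : (V + 2 * c * q) + (2 * V - (V + 2 * c * q)) = 2 * V := by ring
  rw [key1, key2]
  have hcq2 : (4 * (c * q)) ^ 2 = 32 * β / (ρ * A₀) * Real.sqrt A := by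
    have : (4 * (c * q)) ^ 2 = 16 * c ^ 2 * q ^ 2 := by ring
    rw [this, hc2, hq2]; ring
  have hcq4 : (4 * (c * q)) ^ 4 = 1024 * β ^ 2 / (ρ ^ 2 * A₀ ^ 2) * A := by
    have : (4 * (c * q)) ^ 4 = 256 * (c ^ 2) ^ 2 * q ^ 4 := by ring
    rw [this, hc2, hq4]; field_simp; ring
  rw [hcq2, hcq4]
  have hs : Real.sqrt A₀ ^ 2 = A₀ := Real.sq_sqrt hA₀.le
  have hs0 : Real.sqrt A₀ ≠ 0 := by positivity
  set t := Real.sqrt A₀ with htdef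
  clear_value t
  rw [← hs]
  field_simp
  ring
end

section
/- Let A, V : ℝ² → ℝ and let (x,t) ∈ ℝ² be a point at which A and V are differentiable, A(x,t) > 0, and the blood flow PDEs hold pointwise: A_t = −A_x V − A V_x and V_t = −V V_x − (β/(2ρA₀√A)) A_x − K_r V/A. Then the function u(x,t) = V(x,t) + 2√(2β/(ρA₀))·A(x,t)^(1/4) is differentiable at (x,t) and satisfies u_t = −λ₁·u_x − K_r·V/A at (x,t), where λ₁ = V(x,t) + √(β/(2ρA₀))·A(x,t)^(1/4). -/
/-- If `A`, `V` are differentiable at a point where the 1-D blood flow PDEs hold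
pointwise and `A > 0`, then the Riemann invariant `u = V + 2√(2β/(ρA₀))·A^(1/4)` is
differentiable there and satisfies `u_t = −λ₁·u_x − K_r·V/A`. -/
theorem riemann_u_transport (β ρ A₀ Kr : ℝ)
    (hβ : 0 < β) (hρ : 0 < ρ) (hA₀ : 0 < A₀) (hKr : 0 < Kr)
    (A V : ℝ × ℝ → ℝ) (p : ℝ × ℝ)
    (hAdiff : DifferentiableAt ℝ A p) (hVdiff : DifferentiableAt ℝ V p)
    (hApos : 0 < A p)
    (hpde1 : fderiv ℝ A p (0, 1) =
      -(fderiv ℝ A p (1, 0)) * V p - A p * fderiv ℝ V p (1, 0))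
    (hpde2 : fderiv ℝ V p (0, 1) =
      -(V p) * fderiv ℝ V p (1, 0)
        - (β / (2 * ρ * A₀ * Real.sqrt (A p))) * fderiv ℝ A p (1, 0)
        - Kr * V p / A p) :
    DifferentiableAt ℝ
      (fun q => V q + 2 * Real.sqrt (2 * β / (ρ * A₀)) * A q ^ ((1 : ℝ) / 4)) p ∧
    fderiv ℝ (fun q => V q + 2 * Real.sqrt (2 * β / (ρ * A₀)) * A q ^ ((1 : ℝ) / 4)) p (0, 1)
      = -(V p + Real.sqrt (β / (2 * ρ * A₀)) * A p ^ ((1 : ℝ) / 4)) *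
          fderiv ℝ (fun q => V q + 2 * Real.sqrt (2 * β / (ρ * A₀)) * A q ^ ((1 : ℝ) / 4))
            p (1, 0)
        - Kr * V p / A p := by
  set c : ℝ := 2 * Real.sqrt (2 * β / (ρ * A₀)) with hc
  -- HasFDerivAt for the Riemann invariant
  have hA' : HasFDerivAt A (fderiv ℝ A p) p := hAdiff.hasFDerivAt
  have hV' : HasFDerivAt V (fderiv ℝ V p) p := hVdiff.hasFDerivAt
  have hAne : A p ≠ 0 := hApos.ne'
  have hg : HasFDerivAt (fun q => A q ^ ((1 : ℝ) / 4))
      ((((1:ℝ)/4) * A p ^ ((1:ℝ)/4 - 1)) • fderiv ℝ A p) p :=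
    hA'.rpow_const (Or.inl hAne)
  have hu : HasFDerivAt (fun q => V q + c * A q ^ ((1 : ℝ) / 4))
      (fderiv ℝ V p + c • ((((1:ℝ)/4) * A p ^ ((1:ℝ)/4 - 1)) • fderiv ℝ A p)) p :=
    hV'.add (hg.const_mul c)
  refine ⟨hu.differentiableAt, ?_⟩
  rw [hu.fderiv]
  simp only [ContinuousLinearMap.add_apply, ContinuousLinearMap.smul_apply, smul_eq_mul]
  set Vp := V p
  set a := A p
  set Ax := fderiv ℝ A p (1, 0)
  set Vx := fderiv ℝ V p (1, 0)
  set r := a ^ ((1:ℝ)/4) with hr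
  have hrpos : 0 < r := Real.rpow_pos_of_pos hApos _
  have hr4 : r ^ 4 = a := by
    rw [hr, ← Real.rpow_natCast (a ^ ((1:ℝ)/4)) 4, ← Real.rpow_mul hApos.le]
    norm_num
  have hsqrt : Real.sqrt a = r * r := by
    rw [hr, ← Real.rpow_add hApos]
    rw [show (1:ℝ)/4 + 1/4 = 1/2 by norm_num, Real.sqrt_eq_rpow]
  have hpow : a ^ ((1:ℝ)/4 - 1) = r / a := by
    rw [Real.rpow_sub hApos, Real.rpow_one, hr]
  set s : ℝ := Real.sqrt (β / (2 * ρ * A₀)) with hs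
  have hsd : 0 < β / (2 * ρ * A₀) := by positivity
  have hs2 : s * s = β / (2 * ρ * A₀) := Real.mul_self_sqrt hsd.le
  have hcs : c = 4 * s := by
    rw [hc, hs, show 2 * β / (ρ * A₀) = 2^2 * (β / (2 * ρ * A₀)) by ring,
      Real.sqrt_mul (by positivity), Real.sqrt_sq (by norm_num)]
    ring
  rw [hpde1, hpde2, hpow, hcs, hsqrt]
  have h2ρA₀ : β / (2 * ρ * A₀ * (r * r)) = s * s / (r * r) := by
    rw [hs2]; ring
  rw [h2ρA₀]
  have har : a = r ^ 4 := hr4.symm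
  rw [har]
  field_simp
  ring
end

section
/- Let A, V : ℝ² → ℝ and let (x,t) ∈ ℝ² be a point at which A and V are differentiable, A(x,t) > 0, and the blood flow PDEs hold pointwise: A_t = −A_x V − A V_x and V_t = −V V_x − (β/(2ρA₀√A)) A_x − K_r V/A. Then the function v(x,t) = V(x,t) − 2√(2β/(ρA₀))·A(x,t)^(1/4) is differentiable at (x,t) and satisfies v_t = −λ₂·v_x − K_r·V/A at (x,t), where λ₂ = V(x,t) − √(β/(2ρA₀))·A(x,t)^(1/4). -/
/-!
With `c = √(β/(2ρA₀))·A^(1/4)` the local wave speed, the pressure coefficient is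
`β/(2ρA₀√A) = c²/A` and `d(4√(β/(2ρA₀))·A^(1/4)) = (c/A)·dA`, so `v_x = V_x − (c/A)·A_x` and
`v_t = V_t − (c/A)·A_t`. Substituting the two PDEs into `V_t − (c/A)·A_t` regroups it as
`−(V − c)·(V_x − (c/A)·A_x) − K_r·V/A`: this is the characteristic combination of the system.
-/

open Real

theorem HasFDerivAt.sub_const_mul_rpow_const {E : Type*} [NormedAddCommGroup E]
    [NormedSpace ℝ E] {A V : E → ℝ} {A' V' : E →L[ℝ] ℝ} {p : E}
    (hA : HasFDerivAt A A' p) (hV : HasFDerivAt V V' p) (hp : 0 < A p) (k r : ℝ) :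
    HasFDerivAt (fun q => V q - k * A q ^ r) (V' - (k * r * A p ^ r / A p) • A') p := by
  have hpow : HasFDerivAt (fun q => A q ^ r) ((r * A p ^ (r - 1)) • A') p :=
    hA.rpow_const (Or.inl hp.ne')
  have hcoef : k * (r * A p ^ (r - 1)) = k * r * A p ^ r / A p := by
    rw [rpow_sub_one hp.ne']
    ring
  have h := hV.sub (hpow.const_mul k)
  rwa [smul_smul, hcoef] at h

theorem sq_sqrt_mul_rpow_quarter_div {k x : ℝ} (hk : 0 ≤ k) (hx : 0 < x) :
    (√k * x ^ (1 / 4 : ℝ)) ^ 2 / x = k / √x := by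
  have hquarter : (x ^ (1 / 4 : ℝ)) ^ 2 = √x := by
    rw [← rpow_natCast, ← rpow_mul hx.le, sqrt_eq_rpow]
    norm_num
  rw [mul_pow, sq_sqrt hk, hquarter, div_eq_div_iff hx.ne' (sqrt_pos.2 hx).ne', mul_assoc,
    mul_self_sqrt hx.le]

theorem characteristic_combination {A V Ax Vx At Vt c K : ℝ} (hA : A ≠ 0)
    (hAt : At = -Ax * V - A * Vx) (hVt : Vt = -V * Vx - c ^ 2 / A * Ax - K) :
    Vt - c / A * At = -(V - c) * (Vx - c / A * Ax) - K := by
  subst hAt hVt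
  field_simp
  ring

theorem riemann_v_transport_general (β ρ A₀ Kr : ℝ)
    (hβ : 0 < β) (hρ : 0 < ρ) (hA₀ : 0 < A₀)
    (A V : ℝ × ℝ → ℝ) (p : ℝ × ℝ)
    (hAdiff : DifferentiableAt ℝ A p) (hVdiff : DifferentiableAt ℝ V p)
    (hApos : 0 < A p)
    (hpde1 : fderiv ℝ A p (0, 1) =
      -(fderiv ℝ A p (1, 0)) * V p - A p * fderiv ℝ V p (1, 0))
    (hpde2 : fderiv ℝ V p (0, 1) =
      -(V p) * fderiv ℝ V p (1, 0)
        - (β / (2 * ρ * A₀ * Real.sqrt (A p))) * fderiv ℝ A p (1, 0)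
        - Kr * V p / A p) :
    DifferentiableAt ℝ
      (fun q => V q - 2 * Real.sqrt (2 * β / (ρ * A₀)) * A q ^ ((1 : ℝ) / 4)) p ∧
    fderiv ℝ (fun q => V q - 2 * Real.sqrt (2 * β / (ρ * A₀)) * A q ^ ((1 : ℝ) / 4)) p (0, 1)
      = -(V p - Real.sqrt (β / (2 * ρ * A₀)) * A p ^ ((1 : ℝ) / 4)) *
          fderiv ℝ (fun q => V q - 2 * Real.sqrt (2 * β / (ρ * A₀)) * A q ^ ((1 : ℝ) / 4))
            p (1, 0)
        - Kr * V p / A p := by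
  have hcoef : √(2 * β / (ρ * A₀)) = 2 * √(β / (2 * ρ * A₀)) := by
    rw [show 2 * β / (ρ * A₀) = 2 ^ 2 * (β / (2 * ρ * A₀)) by ring, sqrt_mul (by positivity),
      sqrt_sq zero_le_two]
  rw [hcoef]
  set c := √(β / (2 * ρ * A₀)) * A p ^ (1 / 4 : ℝ)
  have hv : HasFDerivAt (fun q => V q - 2 * (2 * √(β / (2 * ρ * A₀))) * A q ^ (1 / 4 : ℝ))
      (fderiv ℝ V p - (c / A p) • fderiv ℝ A p) p := by
    have h := hAdiff.hasFDerivAt.sub_const_mul_rpow_const hVdiff.hasFDerivAt hApos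
      (2 * (2 * √(β / (2 * ρ * A₀)))) (1 / 4)
    rwa [show 2 * (2 * √(β / (2 * ρ * A₀))) * (1 / 4) * A p ^ (1 / 4 : ℝ) / A p = c / A p by
      ring] at h
  have hpressure : β / (2 * ρ * A₀ * √(A p)) = c ^ 2 / A p := by
    rw [sq_sqrt_mul_rpow_quarter_div (by positivity) hApos, div_div]
  refine ⟨hv.differentiableAt, ?_⟩
  rw [hpressure] at hpde2
  simpa only [hv.fderiv, sub_apply, smul_apply, smul_eq_mul] using characteristic_combination hApos.ne' hpde1 hpde2

/-- If `A`, `V` are differentiable at a point where the 1-D blood flow PDEs hold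
pointwise and `A > 0`, then the Riemann invariant `v = V − 2√(2β/(ρA₀))·A^(1/4)` is
differentiable there and satisfies `v_t = −λ₂·v_x − K_r·V/A`. -/
theorem riemann_v_transport (β ρ A₀ Kr : ℝ)
    (hβ : 0 < β) (hρ : 0 < ρ) (hA₀ : 0 < A₀) (hKr : 0 < Kr)
    (A V : ℝ × ℝ → ℝ) (p : ℝ × ℝ)
    (hAdiff : DifferentiableAt ℝ A p) (hVdiff : DifferentiableAt ℝ V p)
    (hApos : 0 < A p)
    (hpde1 : fderiv ℝ A p (0, 1) =
      -(fderiv ℝ A p (1, 0)) * V p - A p * fderiv ℝ V p (1, 0))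
    (hpde2 : fderiv ℝ V p (0, 1) =
      -(V p) * fderiv ℝ V p (1, 0)
        - (β / (2 * ρ * A₀ * Real.sqrt (A p))) * fderiv ℝ A p (1, 0)
        - Kr * V p / A p) :
    DifferentiableAt ℝ
      (fun q => V q - 2 * Real.sqrt (2 * β / (ρ * A₀)) * A q ^ ((1 : ℝ) / 4)) p ∧
    fderiv ℝ (fun q => V q - 2 * Real.sqrt (2 * β / (ρ * A₀)) * A q ^ ((1 : ℝ) / 4)) p (0, 1)
      = -(V p - Real.sqrt (β / (2 * ρ * A₀)) * A p ^ ((1 : ℝ) / 4)) *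
          fderiv ℝ (fun q => V q - 2 * Real.sqrt (2 * β / (ρ * A₀)) * A q ^ ((1 : ℝ) / 4))
            p (1, 0)
        - Kr * V p / A p :=
  riemann_v_transport_general β ρ A₀ Kr hβ hρ hA₀ A V p hAdiff hVdiff hApos hpde1 hpde2
end
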